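/- arXiv:2601.02870 — 2 statements merged into one kernel-verified Lean document; each statement's English description precedes it below -/
import Mathlib

section
/- Let φ₁, ..., φ_T ∈ ℝᵖ, λ > 0, Z₀ = λ·I, Z_t = Z_{t-1} + φ_t φ_tᵀ. Then ∑_{t=1}^T min{ φ_tᵀ Z_{t-1}⁻¹ φ_t , 1 } ≤ 2·log( det(Z_T) / det(λ·I) ). -/
open Matrix

/-- The design matrix `Z_t = λ I + ∑_{s<t} φ_s φ_sᵀ`. -/
noncomputable def designMatrix {p : ℕ} (lam : ℝ) (φ : ℕ → (Fin p → ℝ)) (t : ℕ) :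
    Matrix (Fin p) (Fin p) ℝ :=
  lam • (1 : Matrix (Fin p) (Fin p) ℝ) + ∑ s ∈ Finset.range t, vecMulVec (φ s) (φ s)

lemma vmv_psd {p : ℕ} (v : Fin p → ℝ) : (vecMulVec v v).PosSemidef := by
  have h : replicateCol Unit v = (replicateRow Unit v)ᴴ := by rw [conjTranspose_replicateRow]; simp
  rw [vecMulVec_eq (ι := Unit), h]
  exact posSemidef_conjTranspose_mul_self _

lemma smul_one_pd {p : ℕ} {lam : ℝ} (h : 0 < lam) :
    (lam • (1 : Matrix (Fin p) (Fin p) ℝ)).PosDef := by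
  rw [smul_one_eq_diagonal]
  exact posDef_diagonal_iff.mpr fun _ => h

lemma min_le_two_log {x : ℝ} (hx : 0 ≤ x) : min x 1 ≤ 2 * Real.log (1 + x) := by
  rcases le_total x 1 with h | h
  · rw [min_eq_left h]
    have h1 : (0:ℝ) < 1 + x := by linarith
    have : x/2 ≤ Real.log (1+x) := by
      rw [Real.le_log_iff_exp_le h1]
      have he : 1 - x/2 ≤ Real.exp (-(x/2)) := by
        have := Real.add_one_le_exp (-(x/2)); linarith
      have hp : 0 < Real.exp (x/2) := Real.exp_pos _
      have hm : (1 - x/2) * Real.exp (x/2) ≤ 1 := by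
        calc (1 - x/2) * Real.exp (x/2) ≤ Real.exp (-(x/2)) * Real.exp (x/2) :=
              mul_le_mul_of_nonneg_right he hp.le
          _ = 1 := by rw [← Real.exp_add]; simp
      nlinarith
    linarith
  · rw [min_eq_right h]
    have h2 : Real.log 2 ≤ Real.log (1 + x) := by
      apply Real.log_le_log (by norm_num); linarith
    have := Real.log_two_gt_d9
    linarith

lemma designMatrix_pd {p : ℕ} {lam : ℝ} (hlam : 0 < lam) (φ : ℕ → (Fin p → ℝ)) (t : ℕ) :
    (designMatrix lam φ t).PosDef := by
  unfold designMatrix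
  refine (smul_one_pd hlam).add_posSemidef ?_
  exact Finset.sum_induction _ _ (fun a b ha hb => ha.add hb) PosSemidef.zero
    (fun s _ => vmv_psd (φ s))

lemma designMatrix_det_succ {p : ℕ} {lam : ℝ} (hlam : 0 < lam) (φ : ℕ → (Fin p → ℝ)) (t : ℕ) :
    (designMatrix lam φ (t+1)).det
      = (designMatrix lam φ t).det
        * (1 + φ t ⬝ᵥ ((designMatrix lam φ t)⁻¹ *ᵥ φ t)) := by
  have hrw : designMatrix lam φ (t+1)
      = designMatrix lam φ t + replicateCol Unit (φ t) * replicateRow Unit (φ t) := by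
    unfold designMatrix
    rw [Finset.sum_range_succ, ← add_assoc, vecMulVec_eq (ι := Unit)]
  have hu : IsUnit (designMatrix lam φ t).det :=
    isUnit_iff_ne_zero.mpr (designMatrix_pd hlam φ t).det_pos.ne'
  rw [hrw, det_add_replicateCol_mul_replicateRow hu]
  congr 1
  rw [det_unique]
  simp only [Matrix.add_apply, Matrix.one_apply_eq, Matrix.mul_apply, replicateRow_apply, replicateCol_apply,
    mulVec, dotProduct, Finset.sum_mul, Finset.mul_sum, mul_assoc]
  rw [Finset.sum_comm]

theorem elliptical_potential {p : ℕ} (lam : ℝ) (hlam : 0 < lam)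
    (T : ℕ) (φ : ℕ → (Fin p → ℝ)) :
    ∑ t ∈ Finset.range T, min (φ t ⬝ᵥ ((designMatrix lam φ t)⁻¹ *ᵥ φ t)) 1
      ≤ 2 * Real.log ((designMatrix lam φ T).det
          / (lam • (1 : Matrix (Fin p) (Fin p) ℝ)).det) := by
  set q : ℕ → ℝ := fun t => φ t ⬝ᵥ ((designMatrix lam φ t)⁻¹ *ᵥ φ t) with hq
  have hq0 : ∀ t, 0 ≤ q t := by
    intro t
    have := ((designMatrix_pd hlam φ t).inv).posSemidef.dotProduct_mulVec_nonneg (φ t)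
    simpa using this
  have hdet : (designMatrix lam φ T).det
      = (lam • (1 : Matrix (Fin p) (Fin p) ℝ)).det * ∏ t ∈ Finset.range T, (1 + q t) := by
    induction T with
    | zero => simp [designMatrix]
    | succ n ih =>
      rw [designMatrix_det_succ hlam φ n, ih, Finset.prod_range_succ, mul_assoc]
  have h0 : (0:ℝ) < (lam • (1 : Matrix (Fin p) (Fin p) ℝ)).det := (smul_one_pd hlam).det_pos
  have hdiv : (designMatrix lam φ T).det / (lam • (1 : Matrix (Fin p) (Fin p) ℝ)).det
      = ∏ t ∈ Finset.range T, (1 + q t) := by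
    rw [hdet]; field_simp
  rw [hdiv, Real.log_prod (fun t _ => by have := hq0 t; positivity), Finset.mul_sum]
  exact Finset.sum_le_sum fun t _ => min_le_two_log (hq0 t)
end

section
/- Let K̄ be symmetric positive semidefinite of size N×N, Δ symmetric with K̄ + Δ ⪰ 0, and λ > 0. Then log det(I + (K̄ + Δ)/λ) ≤ log det(I + K̄/λ) + (√N/λ)·‖Δ‖_F. -/
open Matrix
open scoped MatrixOrder

/-- The Frobenius norm of a real matrix. -/
noncomputable def frobNorm {N : ℕ} (A : Matrix (Fin N) (Fin N) ℝ) : ℝ :=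
  Real.sqrt (∑ i, ∑ j, (A i j) ^ 2)

namespace LogdetAux

variable {N : ℕ}

lemma frobNorm_nonneg (A : Matrix (Fin N) (Fin N) ℝ) : 0 ≤ frobNorm A :=
  Real.sqrt_nonneg _

lemma psd_smul {A : Matrix (Fin N) (Fin N) ℝ} (hA : A.PosSemidef) {c : ℝ} (hc : 0 ≤ c) :
    (c • A).PosSemidef := by
  refine PosSemidef.of_dotProduct_mulVec_nonneg ?_ fun x => ?_
  · rw [Matrix.IsHermitian, Matrix.conjTranspose_smul, star_trivial, hA.isHermitian.eq]
  · rw [smul_mulVec, dotProduct_smul]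
    exact mul_nonneg hc (hA.dotProduct_mulVec_nonneg x)

lemma trace_eq_sum_eigs {A : Matrix (Fin N) (Fin N) ℝ} (hA : A.IsHermitian) :
    A.trace = ∑ i, hA.eigenvalues i := by
  conv_lhs => rw [hA.spectral_theorem, Unitary.conjStarAlgAut_apply]
  rw [Matrix.trace_mul_cycle]
  rw [show (star (hA.eigenvectorUnitary : Matrix (Fin N) (Fin N) ℝ)) *
      (hA.eigenvectorUnitary : Matrix (Fin N) (Fin N) ℝ) = 1 from
    Unitary.coe_star_mul_self hA.eigenvectorUnitary, Matrix.one_mul, Matrix.trace_diagonal]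
  simp

lemma trace_nonneg' {A : Matrix (Fin N) (Fin N) ℝ} (hA : A.PosSemidef) : 0 ≤ A.trace := by
  rw [trace_eq_sum_eigs hA.isHermitian]
  exact Finset.sum_nonneg fun i _ => hA.eigenvalues_nonneg i

lemma trace_mul_psd_nonneg {A B : Matrix (Fin N) (Fin N) ℝ}
    (hA : A.PosSemidef) (hB : B.PosSemidef) : 0 ≤ (A * B).trace := by
  have h1 : A = CFC.sqrt A * CFC.sqrt A := (CFC.sqrt_mul_sqrt_self A hA.nonneg).symm
  rw [h1, Matrix.mul_assoc, Matrix.trace_mul_comm]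
  refine trace_nonneg' ?_
  have := hB.mul_mul_conjTranspose_same (CFC.sqrt A)
  rwa [(CFC.sqrt_nonneg A).posSemidef.isHermitian.eq] at this

lemma logdet_le {D : Matrix (Fin N) (Fin N) ℝ} (hD : D.PosDef) :
    Real.log D.det ≤ D.trace - N := by
  have hdet : D.det = ∏ i, hD.isHermitian.eigenvalues i := by
    rw [hD.isHermitian.det_eq_prod_eigenvalues]; norm_num
  rw [hdet, trace_eq_sum_eigs hD.isHermitian,
    Real.log_prod (fun i _ => (hD.eigenvalues_pos i).ne')]
  have h1 : ∑ i, Real.log (hD.isHermitian.eigenvalues i)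
      ≤ ∑ i, (hD.isHermitian.eigenvalues i - 1) :=
    Finset.sum_le_sum fun i _ => Real.log_le_sub_one_of_pos (hD.eigenvalues_pos i)
  refine h1.trans_eq ?_
  rw [Finset.sum_sub_distrib]
  simp

lemma trace_mul_le_frob (M A : Matrix (Fin N) (Fin N) ℝ) :
    (M * A).trace ≤ frobNorm M * frobNorm A := by
  have h1 : (M * A).trace = ∑ p : Fin N × Fin N, M p.1 p.2 * A p.2 p.1 := by
    rw [Fintype.sum_prod_type]
    simp [Matrix.trace, Matrix.mul_apply, Matrix.diag]
  have hcs := Finset.sum_mul_sq_le_sq_mul_sq Finset.univ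
    (fun p : Fin N × Fin N => M p.1 p.2) (fun p : Fin N × Fin N => A p.2 p.1)
  have hM2 : (∑ p : Fin N × Fin N, (M p.1 p.2) ^ 2) = ∑ i, ∑ j, (M i j) ^ 2 := by
    rw [Fintype.sum_prod_type]
  have hA2 : (∑ p : Fin N × Fin N, (A p.2 p.1) ^ 2) = ∑ i, ∑ j, (A i j) ^ 2 := by
    rw [Fintype.sum_prod_type]; exact Finset.sum_comm
  rcases le_or_gt ((M * A).trace) 0 with h | h
  · exact h.trans (mul_nonneg (frobNorm_nonneg M) (frobNorm_nonneg A))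
  · have h2 : ((M * A).trace) ^ 2 ≤ (∑ i, ∑ j, (M i j) ^ 2) * (∑ i, ∑ j, (A i j) ^ 2) := by
      rw [h1, ← hM2, ← hA2]; exact hcs
    have h3 := Real.sqrt_le_sqrt h2
    rw [Real.sqrt_sq h.le, Real.sqrt_mul (show (0:ℝ) ≤ ∑ i, ∑ j, (M i j) ^ 2 from Finset.sum_nonneg fun i _ =>
      Finset.sum_nonneg fun j _ => sq_nonneg _)] at h3
    exact h3

lemma frob_le_sqrt_card {M : Matrix (Fin N) (Fin N) ℝ} (hM : M.PosSemidef)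
    (h1M : (1 - M).PosSemidef) : frobNorm M ≤ Real.sqrt N := by
  have hsum : ∑ i, ∑ j, (M i j) ^ 2 = (M * M).trace := by
    rw [Matrix.trace]
    refine Finset.sum_congr rfl fun i _ => ?_
    rw [Matrix.diag_apply, Matrix.mul_apply]
    refine Finset.sum_congr rfl fun j _ => ?_
    rw [sq]
    congr 1
    simpa using hM.isHermitian.apply j i
  have h2 : 0 ≤ (M * (1 - M)).trace := trace_mul_psd_nonneg hM h1M
  have h3 : M * (1 - M) = M - M * M := by
    rw [Matrix.mul_sub, Matrix.mul_one]
  rw [h3, Matrix.trace_sub] at h2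
  have h4 : 0 ≤ (1 - M).trace := trace_nonneg' h1M
  rw [Matrix.trace_sub, Matrix.trace_one] at h4
  simp only [Fintype.card_fin] at h4
  unfold frobNorm
  rw [hsum]
  exact Real.sqrt_le_sqrt (by linarith)

lemma posdef_conj {A B : Matrix (Fin N) (Fin N) ℝ} (hA : A.PosDef) (hB : B.IsHermitian)
    (hBunit : IsUnit B.det) : (B * A * B).PosDef := by
  refine PosDef.of_dotProduct_mulVec_pos ?_ fun x hx => ?_
  · have := isHermitian_conjTranspose_mul_mul B hA.isHermitian
    rwa [hB.eq] at this
  · have hinj : Function.Injective (B.mulVec) :=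
      Matrix.mulVec_injective_iff_isUnit.mpr ((Matrix.isUnit_iff_isUnit_det B).mpr hBunit)
    have hBx : B *ᵥ x ≠ 0 := fun h => hx (hinj (by simpa using h))
    have h0 := hA.dotProduct_mulVec_pos hBx
    have hrw : B * A * B = Bᴴ * A * B := by rw [hB.eq]
    rw [hrw]
    simpa only [star_mulVec, dotProduct_mulVec, vecMul_vecMul] using h0

end LogdetAux

open LogdetAux in
theorem logdet_perturbation_bound {N : ℕ} (lam : ℝ) (hlam : 0 < lam)
    (Kbar Δ : Matrix (Fin N) (Fin N) ℝ)
    (hKbar : Kbar.PosSemidef) (hΔ : Δ.IsSymm) (hsum : (Kbar + Δ).PosSemidef) :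
    Real.log ((1 + (lam⁻¹ : ℝ) • (Kbar + Δ)).det)
      ≤ Real.log ((1 + (lam⁻¹ : ℝ) • Kbar).det) + (Real.sqrt N / lam) * frobNorm Δ := by
  have hc : (0:ℝ) ≤ lam⁻¹ := by positivity
  set A0 : Matrix (Fin N) (Fin N) ℝ := 1 + lam⁻¹ • Kbar with hA0def
  set A1 : Matrix (Fin N) (Fin N) ℝ := 1 + lam⁻¹ • (Kbar + Δ) with hA1def
  have hA0 : A0.PosDef := Matrix.PosDef.one.add_posSemidef (psd_smul hKbar hc)
  have hA1 : A1.PosDef := Matrix.PosDef.one.add_posSemidef (psd_smul hsum hc)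
  have hA1A0 : A1 = A0 + lam⁻¹ • Δ := by
    rw [hA0def, hA1def, smul_add, add_assoc]
  set S : Matrix (Fin N) (Fin N) ℝ := CFC.sqrt A0 with hSdef
  have hSsym : S.IsHermitian := (CFC.sqrt_nonneg A0).posSemidef.isHermitian
  have hSS : S * S = A0 := CFC.sqrt_mul_sqrt_self A0 hA0.posSemidef.nonneg
  have hdetS : S.det * S.det = A0.det := by rw [← Matrix.det_mul, hSS]
  have hdetSne : S.det ≠ 0 := by
    intro h
    rw [h, mul_zero] at hdetS
    exact hA0.det_pos.ne' hdetS.symm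
  have hSunit : IsUnit S.det := isUnit_iff_ne_zero.mpr hdetSne
  set T : Matrix (Fin N) (Fin N) ℝ := S⁻¹ with hTdef
  have hTsym : T.IsHermitian := hSsym.inv
  have hTT : T * T = A0⁻¹ := by rw [hTdef, ← Matrix.mul_inv_rev, hSS]
  have hST : S * T = 1 := Matrix.mul_nonsing_inv S hSunit
  have hTS : T * S = 1 := Matrix.nonsing_inv_mul S hSunit
  have hTunit : IsUnit T.det := by
    have hu : IsUnit T :=
      Matrix.isUnit_nonsing_inv_iff.mpr ((Matrix.isUnit_iff_isUnit_det S).mpr hSunit)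
    exact (Matrix.isUnit_iff_isUnit_det T).mp hu
  set D : Matrix (Fin N) (Fin N) ℝ := T * A1 * T with hDdef
  have hD : D.PosDef := posdef_conj hA1 hTsym hTunit
  -- det identity : A0.det * D.det = A1.det
  have hSDS : S * D * S = A1 := by
    rw [hDdef]
    calc S * (T * A1 * T) * S = ((S * T) * A1) * (T * S) := by
          simp only [Matrix.mul_assoc]
      _ = A1 := by rw [hST, hTS, Matrix.one_mul, Matrix.mul_one]
  have hdetD : A0.det * D.det = A1.det := by
    have := congrArg Matrix.det hSDS
    rw [Matrix.det_mul, Matrix.det_mul] at this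
    rw [← this, ← hdetS]; ring
  -- trace of D
  have hA0invA0 : A0⁻¹ * A0 = 1 := Matrix.nonsing_inv_mul A0 hA0.det_pos.ne'.isUnit
  have htraceD : D.trace = N + lam⁻¹ * (A0⁻¹ * Δ).trace := by
    rw [hDdef, Matrix.trace_mul_cycle, hTT, hA1A0, Matrix.mul_add, Matrix.trace_add,
      hA0invA0, Matrix.trace_one, Matrix.mul_smul, Matrix.trace_smul]
    simp [smul_eq_mul]
  -- log det bound
  have hlog : Real.log A1.det ≤ Real.log A0.det + lam⁻¹ * (A0⁻¹ * Δ).trace := by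
    have h1 : Real.log A1.det = Real.log A0.det + Real.log D.det := by
      rw [← hdetD, Real.log_mul hA0.det_pos.ne' hD.det_pos.ne']
    have h2 := logdet_le hD
    rw [htraceD] at h2
    have : Real.log D.det ≤ lam⁻¹ * (A0⁻¹ * Δ).trace := by linarith
    linarith
  -- Frobenius bound
  have hMpsd : (A0⁻¹).PosSemidef := hA0.inv.posSemidef
  have hTA0T : T * A0 * T = 1 := by
    rw [← hSS, ← Matrix.mul_assoc, hTS, Matrix.one_mul, hST]
  have hone : (1 : Matrix (Fin N) (Fin N) ℝ) - A0⁻¹ = T * (lam⁻¹ • Kbar) * T := by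
    have hK : lam⁻¹ • Kbar = A0 - 1 := by rw [hA0def]; abel
    rw [hK, Matrix.mul_sub, Matrix.mul_one, Matrix.sub_mul, hTA0T, hTT]
  have h1Mpsd : ((1 : Matrix (Fin N) (Fin N) ℝ) - A0⁻¹).PosSemidef := by
    rw [hone]
    have := (psd_smul hKbar hc).mul_mul_conjTranspose_same T
    rwa [hTsym.eq] at this
  have hfrob : frobNorm (A0⁻¹) ≤ Real.sqrt N := frob_le_sqrt_card hMpsd h1Mpsd
  have htr : (A0⁻¹ * Δ).trace ≤ Real.sqrt N * frobNorm Δ :=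
    (trace_mul_le_frob _ _).trans (mul_le_mul_of_nonneg_right hfrob (frobNorm_nonneg Δ))
  have hmul : lam⁻¹ * (A0⁻¹ * Δ).trace ≤ lam⁻¹ * (Real.sqrt N * frobNorm Δ) :=
    mul_le_mul_of_nonneg_left htr hc
  have heq : (Real.sqrt N / lam) * frobNorm Δ = lam⁻¹ * (Real.sqrt N * frobNorm Δ) := by ring
  rw [heq]
  linarith
end
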